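/- arXiv:2405.14929 — 2 statements merged into one kernel-verified Lean document; each statement's English description precedes it below -/
import Mathlib

section
/- If ψ₁ and ψ₂ are states on a unital C*-algebra with ||ψ₁ - ψ₂|| = 2 (orthogonal states), then ψ₁ and ψ₂ are independent: any positive linear functional f with ψ₁ - f and ψ₂ - f both positive must be zero. -/
/-!
A positive functional `g` on a unital C⋆-algebra satisfies `‖g‖ ≤ re (g 1)`, by Cauchy–Schwarz for
the semi-inner product `⟪x, y⟫ = g (star x * y)`. Applied to `ψ₁ - f` and `ψ₂ - f` this gives
`2 = ‖(ψ₁ - f) - (ψ₂ - f)‖ ≤ 2 - 2 re (f 1)`, so `re (f 1) ≤ 0`, and applied to `f` it gives `‖f‖ ≤ 0`.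
-/

open ComplexOrder

namespace PositiveLinearMap

variable {A : Type*} [CStarAlgebra A] [PartialOrder A] [StarOrderedRing A]

lemma re_apply_star_mul_self_le (f : A →ₚ[ℂ] ℂ) (a : A) :
    (f (star a * a)).re ≤ ‖a‖ ^ 2 * (f 1).re := by
  have h := f.apply_le_of_isSelfAdjoint _ (.star_mul_self a)
  rw [CStarRing.norm_star_mul_self, Algebra.algebraMap_eq_smul_one, ← Complex.coe_smul,
    map_smul] at h
  simpa [sq] using (Complex.le_def.mp h).1

lemma norm_apply_le_re_apply_one_mul (f : A →ₚ[ℂ] ℂ) (a : A) : ‖f a‖ ≤ (f 1).re * ‖a‖ := by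
  have h1 : 0 ≤ (f 1).re := (Complex.le_def.mp (f.map_nonneg zero_le_one)).1
  have hcs := norm_inner_le_norm (𝕜 := ℂ) (f.toPreGNS 1) (f.toPreGNS a)
  rw [f.preGNS_inner_def, f.preGNS_norm_def, f.preGNS_norm_def] at hcs
  simp only [ofPreGNS_toPreGNS, star_one, one_mul] at hcs
  calc ‖f a‖ ≤ √(f 1).re * √(f (star a * a)).re := hcs
    _ ≤ √(f 1).re * √(‖a‖ ^ 2 * (f 1).re) := by gcongr; exact f.re_apply_star_mul_self_le a
    _ = (f 1).re * ‖a‖ := by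
      rw [Real.sqrt_mul (by positivity), Real.sqrt_sq (norm_nonneg a), mul_left_comm,
        Real.mul_self_sqrt h1, mul_comm]

end PositiveLinearMap

namespace ContinuousLinearMap

variable {A : Type*} [CStarAlgebra A] [PartialOrder A] [StarOrderedRing A]

lemma opNorm_le_re_apply_one (g : A →L[ℂ] ℂ) (hg : ∀ a, 0 ≤ g (star a * a)) :
    ‖g‖ ≤ (g 1).re := by
  let f : A →ₚ[ℂ] ℂ := .mk₀ g fun x hx ↦ by
    obtain ⟨b, rfl⟩ := CStarAlgebra.nonneg_iff_eq_star_mul_self.mp hx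
    exact hg b
  exact opNorm_le_bound _ (Complex.le_def.mp (f.map_nonneg zero_le_one)).1
    f.norm_apply_le_re_apply_one_mul

end ContinuousLinearMap

theorem orthogonal_states_independent_general {C : Type*} [NormedRing C] [StarRing C]
    [CStarRing C] [NormedAlgebra ℂ C] [StarModule ℂ C] [CompleteSpace C]
    (ψ₁ ψ₂ : C →L[ℂ] ℂ)
    (hnorm₁ : ψ₁ 1 = 1) (hnorm₂ : ψ₂ 1 = 1)
    (horth : ‖ψ₁ - ψ₂‖ = 2) :
    ∀ f : C →L[ℂ] ℂ, (∀ a : C, 0 ≤ f (star a * a)) →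
      (∀ a : C, 0 ≤ (ψ₁ - f) (star a * a)) →
      (∀ a : C, 0 ≤ (ψ₂ - f) (star a * a)) → f = 0 := by
  intro f hf hf₁ hf₂
  -- In the spectral order the nonnegative elements are exactly the `star a * a`.
  let : CStarAlgebra C := {}
  let := CStarAlgebra.spectralOrder C
  let := CStarAlgebra.spectralOrderedRing C
  have hf_one : (f 1).re ≤ 0 := by
    have : 2 ≤ 2 - 2 * (f 1).re := calc
      2 = ‖(ψ₁ - f) - (ψ₂ - f)‖ := by rw [sub_sub_sub_cancel_right, horth]
      _ ≤ ‖ψ₁ - f‖ + ‖ψ₂ - f‖ := norm_sub_le _ _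
      _ ≤ ((ψ₁ - f) 1).re + ((ψ₂ - f) 1).re :=
        add_le_add ((ψ₁ - f).opNorm_le_re_apply_one hf₁) ((ψ₂ - f).opNorm_le_re_apply_one hf₂)
      _ = 2 - 2 * (f 1).re := by
        simp only [sub_apply, hnorm₁, hnorm₂, Complex.sub_re, Complex.one_re]
        ring
    linarith
  exact norm_le_zero_iff.mp ((f.opNorm_le_re_apply_one hf).trans hf_one)

/-- Orthogonal states (i.e. `‖ψ₁ - ψ₂‖ = 2`) on a unital C*-algebra are independent:
any positive linear functional `f` with both `ψ₁ - f` and `ψ₂ - f` positive is zero. -/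
theorem orthogonal_states_independent {C : Type*} [NormedRing C] [StarRing C]
    [CStarRing C] [NormedAlgebra ℂ C] [StarModule ℂ C] [CompleteSpace C] [NormOneClass C]
    (ψ₁ ψ₂ : C →L[ℂ] ℂ)
    (hpos₁ : ∀ a : C, 0 ≤ ψ₁ (star a * a)) (hnorm₁ : ψ₁ 1 = 1)
    (hpos₂ : ∀ a : C, 0 ≤ ψ₂ (star a * a)) (hnorm₂ : ψ₂ 1 = 1)
    (horth : ‖ψ₁ - ψ₂‖ = 2) :
    ∀ f : C →L[ℂ] ℂ, (∀ a : C, 0 ≤ f (star a * a)) →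
      (∀ a : C, 0 ≤ (ψ₁ - f) (star a * a)) →
      (∀ a : C, 0 ≤ (ψ₂ - f) (star a * a)) → f = 0 :=
  orthogonal_states_independent_general ψ₁ ψ₂ hnorm₁ hnorm₂ horth
end

section
/- Let ω be a product state on a tensor product C*-algebra A ⊗ B, τ an automorphism, A ∈ A⊗1 and B ∈ 1⊗B local elements. Suppose ||τ(A) - A_r|| < C_A e^{-ar}||A|| and ||τ(B) - B_r|| < C_B e^{-ar}||B|| for elements A_r, B_r with disjoint supports satisfying ω(A_r) = ω(B_r) = 0, and ψ = ω∘τ with ψ(A) = ψ(B) = 0. Then |ψ(AB) - ψ(A)ψ(B)| ≤ C₀ ||A||·||B|| e^{-kd} for suitable constants C₀, k > 0, where d is three times the approximation radius (exponential clustering of SRE states). -/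
/-!
Since `ω (τ A) = 0`, the connected correlation is just `ω (τ A * τ B)`. Replacing `τ A, τ B` by the
approximants, `τ A * τ B - Ar * Br = (τ A - Ar) * τ B + Ar * (τ B - Br)` has norm `O(e^{-a s})`,
while `ω (Ar * Br) = ω Ar * ω Br = 0`. A positive functional on a C⋆-algebra is bounded, so
`|ω (τ A * τ B)| = O(e^{-a s}) = O(e^{-(a/3) d})`.
-/

open ComplexOrder

theorem LinearMap.exists_pos_norm_apply_le_of_nonneg_star_mul_self {A : Type*}
    [NonUnitalCStarAlgebra A] [PartialOrder A] [StarOrderedRing A]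
    (f : A →ₗ[ℂ] ℂ) (hf : ∀ a, 0 ≤ f (star a * a)) : ∃ M > 0, ∀ a, ‖f a‖ ≤ M * ‖a‖ := by
  have hpos : ∀ x, 0 ≤ x → 0 ≤ f x := fun x hx => by
    obtain ⟨b, rfl⟩ := CStarAlgebra.nonneg_iff_eq_star_mul_self.mp hx
    exact hf b
  obtain ⟨M, hM⟩ := (PositiveLinearMap.mk₀ f hpos).exists_norm_apply_le
  exact ⟨M + 1, by positivity, fun a => (hM a).trans (by gcongr; linarith)⟩

theorem norm_map_mul_sub_map_mul_le {R E F : Type*} [NonUnitalSeminormedRing R]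
    [SeminormedAddCommGroup E] [FunLike F R E] [AddMonoidHomClass F R E] {f : F} {M : ℝ}
    (hM : 0 ≤ M) (hf : ∀ x, ‖f x‖ ≤ M * ‖x‖) (x y x' y' : R) :
    ‖f (x * y) - f (x' * y')‖ ≤ M * (‖x - x'‖ * ‖y‖ + ‖x'‖ * ‖y - y'‖) := by
  have hsplit : x * y - x' * y' = (x - x') * y + x' * (y - y') := by noncomm_ring
  calc ‖f (x * y) - f (x' * y')‖ = ‖f ((x - x') * y + x' * (y - y'))‖ := by
        rw [← map_sub, hsplit]
    _ ≤ M * ‖(x - x') * y + x' * (y - y')‖ := hf _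
    _ ≤ M * (‖x - x'‖ * ‖y‖ + ‖x'‖ * ‖y - y'‖) := by
        gcongr
        exact (norm_add_le _ _).trans (add_le_add (norm_mul_le _ _) (norm_mul_le _ _))

theorem sre_exponential_clustering_general {C : Type*} [NormedRing C] [StarRing C]
    [CStarRing C] [NormedAlgebra ℂ C] [StarModule ℂ C] [CompleteSpace C]
    (ω : C →ₗ[ℂ] ℂ)
    (hωpos : ∀ a : C, 0 ≤ ω (star a * a))
    (τ : C ≃⋆ₐ[ℂ] C)
    (CA CB a : ℝ) (hCA : 0 < CA) (hCB : 0 < CB) (ha : 0 < a) :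
    ∃ C₀ k : ℝ, 0 < C₀ ∧ 0 < k ∧
      ∀ (s : ℕ) (A B Ar Br : C),
        ω (Ar * Br) = ω Ar * ω Br →
        ω Ar = 0 → ω Br = 0 →
        ‖τ A - Ar‖ < CA * Real.exp (-(a * s)) * ‖A‖ →
        ‖τ B - Br‖ < CB * Real.exp (-(a * s)) * ‖B‖ →
        ω (τ A) = 0 → ω (τ B) = 0 →
        ‖ω (τ (A * B)) - ω (τ A) * ω (τ B)‖
          ≤ C₀ * ‖A‖ * ‖B‖ * Real.exp (-(k * (3 * s))) := by
  let : CStarAlgebra C := ⟨⟩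
  let : PartialOrder C := CStarAlgebra.spectralOrder C
  let : StarOrderedRing C := CStarAlgebra.spectralOrderedRing C
  obtain ⟨M, hM, hωle⟩ := ω.exists_pos_norm_apply_le_of_nonneg_star_mul_self hωpos
  refine ⟨M * (CA + (1 + CA) * CB), a / 3, by positivity, by positivity, ?_⟩
  intro s A B Ar Br hprod hAr _ hA hB hψA _
  have hτ (x : C) : ‖τ x‖ = ‖x‖ := NonUnitalStarAlgHom.norm_map τ τ.injective x
  set e := Real.exp (-(a * s))
  have he : e ≤ 1 := Real.exp_le_one_iff.mpr (by simp only [neg_nonpos]; positivity)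
  have hAr_norm : ‖Ar‖ ≤ (1 + CA) * ‖A‖ := calc
    ‖Ar‖ ≤ ‖τ A‖ + ‖Ar - τ A‖ := norm_le_norm_add_norm_sub' _ _
    _ ≤ ‖A‖ + CA * e * ‖A‖ := by rw [hτ, norm_sub_rev]; exact add_le_add le_rfl hA.le
    _ ≤ ‖A‖ + CA * 1 * ‖A‖ := by gcongr
    _ = (1 + CA) * ‖A‖ := by ring
  have hcorr := norm_map_mul_sub_map_mul_le hM.le hωle (τ A) (τ B) Ar Br
  rw [hprod, hAr, zero_mul, sub_zero, hτ] at hcorr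
  rw [hψA, zero_mul, sub_zero, map_mul, show a / 3 * (3 * s) = a * s by ring]
  calc ‖ω (τ A * τ B)‖ ≤ M * (‖τ A - Ar‖ * ‖B‖ + ‖Ar‖ * ‖τ B - Br‖) := hcorr
    _ ≤ M * (CA * e * ‖A‖ * ‖B‖ + (1 + CA) * ‖A‖ * (CB * e * ‖B‖)) := by
        gcongr
    _ = M * (CA + (1 + CA) * CB) * ‖A‖ * ‖B‖ * e := by ring

/-- Exponential clustering of short-range entangled states. Let `ω` be a state on a
C*-algebra and `τ` an automorphism, with `ψ = ω ∘ τ`. There are constants `C₀, k > 0`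
(depending only on `C_A, C_B, a`) such that: for any approximation radius `s`, and
elements `A, B` with `ψ(A) = ψ(B) = 0` admitting approximants `Ar, Br` with disjoint
supports (so that `ω(Ar·Br) = ω(Ar)·ω(Br)`), `ω(Ar) = ω(Br) = 0`, and
`‖τ(A) - Ar‖ < C_A e^{-a s}‖A‖`, `‖τ(B) - Br‖ < C_B e^{-a s}‖B‖`, one has
`|ψ(AB) - ψ(A)ψ(B)| ≤ C₀‖A‖‖B‖ e^{-k d}` where `d = 3s`. -/
theorem sre_exponential_clustering {C : Type*} [NormedRing C] [StarRing C]
    [CStarRing C] [NormedAlgebra ℂ C] [StarModule ℂ C] [CompleteSpace C]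
    (ω : C →ₗ[ℂ] ℂ)
    (hωpos : ∀ a : C, 0 ≤ ω (star a * a)) (hωnorm : ω 1 = 1)
    (τ : C ≃⋆ₐ[ℂ] C)
    (CA CB a : ℝ) (hCA : 0 < CA) (hCB : 0 < CB) (ha : 0 < a) :
    ∃ C₀ k : ℝ, 0 < C₀ ∧ 0 < k ∧
      ∀ (s : ℕ) (A B Ar Br : C),
        ω (Ar * Br) = ω Ar * ω Br →
        ω Ar = 0 → ω Br = 0 →
        ‖τ A - Ar‖ < CA * Real.exp (-(a * s)) * ‖A‖ →
        ‖τ B - Br‖ < CB * Real.exp (-(a * s)) * ‖B‖ →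
        ω (τ A) = 0 → ω (τ B) = 0 →
        ‖ω (τ (A * B)) - ω (τ A) * ω (τ B)‖
          ≤ C₀ * ‖A‖ * ‖B‖ * Real.exp (-(k * (3 * s))) :=
  sre_exponential_clustering_general ω hωpos τ CA CB a hCA hCB ha
end
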